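/- Let d ≥ 3. Let F' be an extended hyperorthogonal well-folded curve obtained by one step of inflation from G'(d), and let R' be an extended hyperorthogonal well-folded curve obtained by one step of inflation from the reverse of G'(d). Then there is no non-reverse isometry, i.e., no hyperoctahedral symmetry τ of the cube (without reversal of the curve), such that τ(R') visits its vertices in the same order as F'. -/

import Mathlib

open MeasureTheory

/-! ## Basic objects: points of `ℤ^d` (indexed by coordinates `1,…,d`), directions,
Gray codes, curves on the grid, inflation, well-foldedness, hyperorthogonality. -/

/-- A point of the grid `ℤ^d`; only coordinates `1,…,d` are meaningful
(coordinate `0` and coordinates `> d` are kept equal to `0`). -/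
abbrev Pt : Type := ℕ → ℤ

def ptZero : Pt := fun _ => 0

/-- `flipped i = 1` if `i < 0`, and `0` otherwise. -/
def flipped (i : ℤ) : ℤ := if i < 0 then 1 else 0

/-- Reversal of a free curve (sequence of directions): reverse the order and
negate every direction. -/
def grayRev (l : List ℤ) : List ℤ := (l.map (fun x => -x)).reverse

/-- The Gray-code free curve `G(d)`: `G(0)` is empty and `G(d)` is the
concatenation of `G(d-1)`, the single direction `d`, and the reverse of `G(d-1)`. -/
def G : ℕ → List ℤ
  | 0 => []
  | d + 1 => G d ++ [((d : ℤ) + 1)] ++ grayRev (G d)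

/-- Moving a point one step in direction `e`: coordinate `|e|` changes by `sgn e`. -/
def move (v : Pt) (e : ℤ) : Pt := fun j => if j = e.natAbs then v j + e.sign else v j

/-- The vertices of the path starting at `start` whose successive edge
directions are given by `dirs`. -/
def pathVertices (start : Pt) (dirs : List ℤ) : List Pt := dirs.scanl move start

/-- `e` is a valid direction in `d` dimensions: `e ∈ {−d,…,−1,1,…,d}`. -/
def IsDir (d : ℕ) (e : ℤ) : Prop := e ≠ 0 ∧ e.natAbs ≤ d

/-- The (ordered) pair `(v,w)` is an edge with direction `e`. -/
def HasDir (d : ℕ) (v w : Pt) (e : ℤ) : Prop := IsDir d e ∧ w = move v e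

/-- `(v,w)` is an edge of the grid. -/
def IsEdge (d : ℕ) (v w : Pt) : Prop := ∃ e, HasDir d v w e

/-- A curve on the grid: a finite sequence of distinct points in which each pair of
consecutive points differs by `±1` in exactly one coordinate. -/
def IsGridCurve (d : ℕ) (c : List Pt) : Prop := c.Nodup ∧ c.Chain' (IsEdge d)

/-- Membership in the cube `{0,…,2^k−1}^d` (unused coordinates are `0`). -/
def InCube (d k : ℕ) (v : Pt) : Prop :=
  (∀ j, 1 ≤ j → j ≤ d → 0 ≤ v j ∧ v j < 2 ^ k) ∧ (∀ j, j = 0 ∨ d < j → v j = 0)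

/-- A `k`-curve: a Hamiltonian path on the grid `{0,…,2^k−1}^d`. -/
def IsKCurve (d k : ℕ) (c : List Pt) : Prop :=
  IsGridCurve d c ∧ ∀ v : Pt, v ∈ c ↔ InCube d k v

/-- A signed permutation of `{−d,…,−1,1,…,d}`: a bijection `σ` of this set
with `σ(−k) = −σ(k)` (bundled with its inverse). -/
structure SignedPerm (d : ℕ) where
  f : ℤ → ℤ
  inv : ℤ → ℤ
  maps : ∀ i : ℤ, IsDir d i → IsDir d (f i)
  maps_inv : ∀ i : ℤ, IsDir d i → IsDir d (inv i)
  neg : ∀ i : ℤ, f (-i) = -f i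
  neg_inv : ∀ i : ℤ, inv (-i) = -inv i
  left_inv : ∀ i : ℤ, IsDir d i → inv (f i) = i
  right_inv : ∀ i : ℤ, IsDir d i → f (inv i) = i

/-- The 1-curve `σ(G(d))` (an isometric image of the Gray-code curve) placed in the
cube `2·v + {0,1}^d`; its entry corner is forced to be
`2·v + (flipped(σ⁻¹(1)),…,flipped(σ⁻¹(d)))`. -/
def grayPiece (d : ℕ) (σ : SignedPerm d) (v : Pt) : List Pt :=
  pathVertices (fun j => 2 * v j + if 1 ≤ j ∧ j ≤ d then flipped (σ.inv (j : ℤ)) else 0)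
    ((G d).map σ.f)

/-- `B` is obtained from `A` by (well-folded) inflation: each vertex of `A` is
replaced by an isometric image of `G(d)` in the corresponding subcube, and the
result is a valid curve on the grid. (Reversed images of `G(d)` are themselves
images of `G(d)` under another signed permutation, so no generality is lost.) -/
def IsInflationWF (d : ℕ) (A B : List Pt) : Prop :=
  ∃ σ : ℕ → SignedPerm d,
    B = ((List.range A.length).map (fun i => grayPiece d (σ i) (A.getD i ptZero))).flatten ∧
    IsGridCurve d B

/-- A curve is well-folded if it is a single vertex or is obtained by inflation from a
well-folded curve, every inserted 1-curve being an isometric image of `G(d)`. -/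
inductive WellFolded (d : ℕ) : List Pt → Prop
  | single (v : Pt) : WellFolded d [v]
  | inflate {A B : List Pt} : WellFolded d A → IsInflationWF d A B → WellFolded d B

/-- The set of axes in which `v` and `w` differ (for a grid edge this is the
singleton of its axis). -/
def axesOfEdge (d : ℕ) (v w : Pt) : Finset ℕ :=
  (Finset.range (d + 1)).filter (fun j => v j ≠ w j)

/-- Hyperorthogonality: for every `n ∈ {0,…,d−2}`, every `2^n` consecutive
edges of the curve have exactly `n+1` distinct axes. -/
def Hyperorthogonal (d : ℕ) (c : List Pt) : Prop :=
  ∀ n, n ≤ d - 2 → ∀ s, s + 2 ^ n + 1 ≤ c.length →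
    ((Finset.range (2 ^ n)).biUnion
      (fun t => axesOfEdge d (c.getD (s + t) ptZero) (c.getD (s + t + 1) ptZero))).card = n + 1

/-- The depth of a direction `a` in a signed permutation `σ`:
`0` if `|a| ∈ {|σ(d)|,|σ(d−1)|}`, and otherwise the number `j` with `|σ(d−1−j)| = |a|`. -/
def depth (d : ℕ) (σ : SignedPerm d) (a : ℤ) : ℕ :=
  if (σ.inv a).natAbs = d ∨ (σ.inv a).natAbs = d - 1 then 0 else d - 1 - (σ.inv a).natAbs

/-- The (signed) direction of the edge from `v` to `w`
(for a grid edge with axis `j` this is `±j`). -/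
def dirOf (d : ℕ) (v w : Pt) : ℤ :=
  ∑ j ∈ (Finset.range (d + 1)).filter (fun j => v j ≠ w j), (j : ℤ) * (w j - v j)

/-- The axis of the edge from `v` to `w`. -/
def axisOf (d : ℕ) (v w : Pt) : ℕ := (dirOf d v w).natAbs

/-! ## Extended curves -/

/-- For the extended curve with entry-edge direction `en`, vertex list `c` and
exit-edge direction `ex`, the axis of its `t`-th edge, where the entry edge has
index `0`, the internal edges have indices `1,…,c.length − 1` (edge `t` joins
`c[t−1]` and `c[t]`) and the exit edge has index `c.length`. -/
def axE (d : ℕ) (en : ℤ) (c : List Pt) (ex : ℤ) (t : ℕ) : ℕ :=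
  if t = 0 then en.natAbs
  else if t = c.length then ex.natAbs
  else axisOf d (c.getD (t - 1) ptZero) (c.getD t ptZero)

/-- The edge distance of the axis `a` to the vertex with index `p` within the
extended curve `(en, c, ex)`: one less than the number of edges of the smallest
contiguous subcurve containing this vertex and an edge with axis `a`. -/
noncomputable def edgedistE (d : ℕ) (en : ℤ) (c : List Pt) (ex : ℤ) (p a : ℕ) : ℕ :=
  sInf {m | ∃ t, t ≤ c.length ∧ axE d en c ex t = a ∧
    m = if t ≤ p then p - t else t - p - 1}

/-- Hyperorthogonality of an extended curve: every `2^n` consecutive edges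
(including the entry and exit edges) have exactly `n+1` distinct axes, for all
`n ∈ {0,…,d−2}`. -/
def HyperorthogonalE (d : ℕ) (en : ℤ) (c : List Pt) (ex : ℤ) : Prop :=
  ∀ n, n ≤ d - 2 → ∀ s, s + 2 ^ n ≤ c.length + 1 →
    ((Finset.range (2 ^ n)).image (fun t => axE d en c ex (s + t))).card = n + 1

/-- The sequence of approximating curves determined by a system of signed
permutations `σ k i` (one for each vertex `i` of the `k`-th curve):
`A_0` is the single vertex at the origin and `A_{k+1}` is obtained from `A_k` by
inflation, vertex `i` being replaced by the 1-curve `σ_{k,i}(G(d))`. -/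
def buildCurve (d : ℕ) (σ : ℕ → ℕ → SignedPerm d) : ℕ → List Pt
  | 0 => [ptZero]
  | k + 1 =>
    ((List.range (buildCurve d σ k).length).map
      (fun i => grayPiece d (σ k i) ((buildCurve d σ k).getD i ptZero))).flatten

/-- `f : [0,1] → [0,1]^d` is the space-filling curve approximated by the curves
`A k`: the `i`-th vertex of `A k` corresponds to the cube `2^{−k}(v_{k,i} + [0,1]^d)`,
and `f` maps `[i/2^{dk},(i+1)/2^{dk}]` into that cube. -/
def Approximates (d : ℕ) (A : ℕ → List Pt) (f : ℝ → Fin d → ℝ) : Prop :=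
  ∀ k i, i < (A k).length → ∀ t : ℝ,
    (i : ℝ) / 2 ^ (d * k) ≤ t → t ≤ ((i : ℝ) + 1) / 2 ^ (d * k) →
    ∀ j : Fin d,
      ((((A k).getD i ptZero) ((j : ℕ) + 1) : ℝ) / 2 ^ k ≤ f t j ∧
        f t j ≤ ((((A k).getD i ptZero) ((j : ℕ) + 1) : ℝ) + 1) / 2 ^ k)

/-- The smallest axis-aligned box containing a (nonempty, bounded) set `S ⊆ ℝ^d`. -/
noncomputable def bbox (d : ℕ) (S : Set (Fin d → ℝ)) : Set (Fin d → ℝ) :=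
  Set.univ.pi fun j => Set.Icc (sInf ((fun p => p j) '' S)) (sSup ((fun p => p j) '' S))

/-! ## General inflation (arbitrary 1-curves), isometric copies, self-similarity -/

/-- `c` is a 1-curve on the translated unit cube `2·base + {0,1}^d`. -/
def IsUnitCurveAt (d : ℕ) (base : Pt) (c : List Pt) : Prop :=
  IsGridCurve d c ∧
    ∀ v : Pt, v ∈ c ↔
      ((∀ j, 1 ≤ j → j ≤ d → v j = 2 * base j ∨ v j = 2 * base j + 1) ∧
        ∀ j, j = 0 ∨ d < j → v j = 2 * base j)

/-- `B` is obtained from `A` by (general) inflation: each vertex `v_i` of `A` is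
replaced by a 1-curve on `2·v_i + {0,1}^d`, and each edge of `A` with direction `e_i`
is replaced by an edge of the same direction connecting consecutive 1-curves. -/
def IsInflation (d : ℕ) (A B : List Pt) : Prop :=
  ∃ C : ℕ → List Pt,
    B = ((List.range A.length).map C).flatten ∧
    IsGridCurve d B ∧
    (∀ i, i < A.length → IsUnitCurveAt d (A.getD i ptZero) (C i)) ∧
    (∀ i, i + 1 < A.length → ∀ e : ℤ,
      HasDir d (A.getD i ptZero) (A.getD (i + 1) ptZero) e →
      HasDir d ((C i).getLastD ptZero) ((C (i + 1)).headD ptZero) e)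

/-- `InflationChain d k X`: `X` is constructed from a single vertex by `k` steps
of inflation. -/
inductive InflationChain (d : ℕ) : ℕ → List Pt → Prop
  | base (v : Pt) : InflationChain d 0 [v]
  | step {k : ℕ} {A B : List Pt} :
      InflationChain d k A → IsInflation d A B → InflationChain d (k + 1) B

/-- The hyperoctahedral symmetry of the cube `{0,…,M}^d` given by the signed
permutation `σ`: the coordinate `|σ⁻¹(j)|` of the argument is sent to coordinate `j`,
reflected (`x ↦ M − x`) whenever `σ⁻¹(j) < 0`. -/
def applySP (d : ℕ) (M : ℤ) (σ : SignedPerm d) (x : Pt) : Pt :=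
  fun j =>
    if 1 ≤ j ∧ j ≤ d then
      if 0 ≤ σ.inv (j : ℤ) then x (σ.inv (j : ℤ)).natAbs
      else M - x (σ.inv (j : ℤ)).natAbs
    else x j

/-- `B` is an isometric copy of the curve `A` (living in a cube `{0,…,M}^d`):
a hyperoctahedral symmetry, possibly composed with reversal, followed by a translation. -/
def IsometricCopy (d : ℕ) (M : ℤ) (A B : List Pt) : Prop :=
  ∃ σ : SignedPerm d, ∃ rev : Bool, ∃ tr : Pt,
    B = (if rev then A.reverse else A).map (fun v => fun j => applySP d M σ v j + tr j)

/-- Self-similarity of one approximation step: `B` is the concatenation of `2^d`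
isometric copies of the `k`-curve `A`, connected by single edges. -/
def SelfSimilarStep (d k : ℕ) (A B : List Pt) : Prop :=
  ∃ parts : ℕ → List Pt,
    B = ((List.range (2 ^ d)).map parts).flatten ∧
    IsGridCurve d B ∧
    ∀ m, m < 2 ^ d → IsometricCopy d ((2 : ℤ) ^ k - 1) A (parts m)

/-- Coordinate `a ∈ {1,…,d}` of a point of `ℝ^d`. -/
noncomputable def coordR (d : ℕ) (x : Fin d → ℝ) (a : ℕ) : ℝ :=
  if h : a - 1 < d then x ⟨a - 1, h⟩ else 0

/-- The hyperoctahedral symmetry of the unit cube `[0,1]^d` given by the signed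
permutation `σ`. -/
noncomputable def applySPR (d : ℕ) (σ : SignedPerm d) (x : Fin d → ℝ) : Fin d → ℝ :=
  fun j =>
    if 0 ≤ σ.inv ((j : ℕ) + 1 : ℤ) then coordR d x (σ.inv ((j : ℕ) + 1 : ℤ)).natAbs
    else 1 - coordR d x (σ.inv ((j : ℕ) + 1 : ℤ)).natAbs

/-- `f` is a self-similar hyperorthogonal well-folded space-filling curve:
it is approximated by a sequence of `k`-curves, starting from a single vertex,
in which each curve is obtained from the previous one by well-folded inflation,
all approximating curves are hyperorthogonal, and each approximating curve is the
concatenation of `2^d` isometric copies of the previous one. -/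
def SSHOWFcurve (d : ℕ) (f : ℝ → Fin d → ℝ) : Prop :=
  ∃ A : ℕ → List Pt,
    A 0 = [ptZero] ∧
    (∀ k, IsInflationWF d (A k) (A (k + 1))) ∧
    (∀ k, IsKCurve d k (A k)) ∧
    (∀ k, Hyperorthogonal d (A k)) ∧
    (∀ k, SelfSimilarStep d k (A k) (A (k + 1))) ∧
    Approximates d A f

/-- Two space-filling curves are the same up to hyperoctahedral symmetry and
reversal. -/
def curveEquiv (d : ℕ) (f g : ℝ → Fin d → ℝ) : Prop :=
  ∃ τ : SignedPerm d,
    (∀ t ∈ Set.Icc (0 : ℝ) 1, g t = applySPR d τ (f t)) ∨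
    (∀ t ∈ Set.Icc (0 : ℝ) 1, g t = applySPR d τ (f (1 - t)))

/-- The direction of the entry edge of the extended child curve `C'_m` within the
inflation of the extended curve `(e0, A, e1)`. -/
def childEntryDir (d : ℕ) (A : List Pt) (e0 : ℤ) (m : ℕ) : ℤ :=
  if m = 0 then e0 else dirOf d (A.getD (m - 1) ptZero) (A.getD m ptZero)

/-- The direction of the exit edge of the extended child curve `C'_m` within the
inflation of the extended curve `(e0, A, e1)`. -/
def childExitDir (d : ℕ) (A : List Pt) (e1 : ℤ) (m : ℕ) : ℤ :=
  if m + 1 = A.length then e1 else dirOf d (A.getD m ptZero) (A.getD (m + 1) ptZero)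

/-- The local edge distance of the axis `a` to the vertex with index `i` within the
extended approximating curve `A'_k` (entry direction `e0`, exit direction `e1`)
of the system `σ`: the edge distance within the extended child curve of `A'_{k-1}`
containing this vertex. -/
noncomputable def led (d : ℕ) (σ : ℕ → ℕ → SignedPerm d) (e0 e1 : ℤ) :
    ℕ → ℕ → ℕ → ℕ
  | 0, _, a => edgedistE d e0 (buildCurve d σ 0) e1 0 a
  | k + 1, i, a =>
    edgedistE d (childEntryDir d (buildCurve d σ k) e0 (i / 2 ^ d))
      (grayPiece d (σ k (i / 2 ^ d)) ((buildCurve d σ k).getD (i / 2 ^ d) ptZero))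
      (childExitDir d (buildCurve d σ k) e1 (i / 2 ^ d))
      (i % 2 ^ d) a

/-- The system of permutations `σ` describes a sequence of extended hyperorthogonal
well-folded approximating curves with entry direction `e0` and exit direction `e1`,
in which the signs of `σ_{k,1}⁻¹` are prescribed by `s`, and the elements of every
unsigned permutation `|σ_{k,i}|` are sorted by decreasing local edge distance. -/
def GoodSystem (d : ℕ) (e0 e1 : ℤ) (s : ℕ → ℕ → ℤ) (σ : ℕ → ℕ → SignedPerm d) : Prop :=
  (∀ k, IsKCurve d k (buildCurve d σ k)) ∧
  (∀ k, HyperorthogonalE d e0 (buildCurve d σ k) e1) ∧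
  (∀ k, ¬ InCube d k (move ((buildCurve d σ k).headD ptZero) (-e0))) ∧
  (∀ k, ¬ InCube d k (move ((buildCurve d σ k).getLastD ptZero) e1)) ∧
  (∀ k j, 1 ≤ j → j ≤ d → Int.sign ((σ k 0).inv (j : ℤ)) = s k j) ∧
  (∀ k i, i < (buildCurve d σ k).length →
    ∀ p q : ℕ, 1 ≤ p → p ≤ q → q ≤ d →
      led d σ e0 e1 k i (((σ k i).f (q : ℤ)).natAbs) ≤
        led d σ e0 e1 k i (((σ k i).f (p : ℤ)).natAbs))

/-- The Butz-Moore generalization of the Hilbert curve, described by the conditions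
on its system of signed permutations: `|σ_{k,i}(d)| = 1` for the first and last
subcube, `|σ_{k,i}(d)| = max(|e_{k,i−1}|,|e_{k,i}|)` in between, all unsigned
permutations are cyclic rotations, and the entry is at the origin. -/
def ButzMoore (d : ℕ) (σ : ℕ → ℕ → SignedPerm d) : Prop :=
  (∀ k, IsKCurve d k (buildCurve d σ k)) ∧
  (∀ k i, i < 2 ^ (d * k) → (i = 0 ∨ i = 2 ^ (d * k) - 1) →
    ((σ k i).f (d : ℤ)).natAbs = 1) ∧
  (∀ k i, 0 < i → i + 1 < 2 ^ (d * k) →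
    ((σ k i).f (d : ℤ)).natAbs =
      max (dirOf d ((buildCurve d σ k).getD (i - 1) ptZero)
            ((buildCurve d σ k).getD i ptZero)).natAbs
          (dirOf d ((buildCurve d σ k).getD i ptZero)
            ((buildCurve d σ k).getD (i + 1) ptZero)).natAbs) ∧
  (∀ k i j, 1 ≤ j → j ≤ d →
    ((σ k i).f (j : ℤ)).natAbs = ((((σ k i).f (d : ℤ)).natAbs + j - 1) % d) + 1) ∧
  (∀ k j, 1 ≤ j → j ≤ d → 0 ≤ (σ k 0).inv (j : ℤ))

/-! ## Generalized curves (diagonal edges allowed) -/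

/-- A generalized edge: `w ≠ v` and every coordinate changes by at most 1. -/
def IsGenEdge (d : ℕ) (v w : Pt) : Prop :=
  v ≠ w ∧ (∀ j, 1 ≤ j → j ≤ d → |w j - v j| ≤ 1) ∧ ∀ j, j = 0 ∨ d < j → w j = v j

/-- A generalized curve on the grid (diagonal edges allowed). -/
def IsGenCurve (d : ℕ) (c : List Pt) : Prop := c.Nodup ∧ c.Chain' (IsGenEdge d)

/-- Generalized inflation: vertices are replaced by 1-curves on the corresponding
subcubes, consecutive 1-curves being joined by a single (possibly diagonal) edge. -/
def IsGenInflation (d : ℕ) (A B : List Pt) : Prop :=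
  ∃ C : ℕ → List Pt,
    B = ((List.range A.length).map C).flatten ∧
    IsGenCurve d B ∧
    (∀ i, i < A.length → IsUnitCurveAt d (A.getD i ptZero) (C i))

/-!
Let `P` be the vertex sequence of the Gray curve `G(d)` in `{0,1}^d`. The pieces of `F` lie in
the subcubes `2·P[i]` and those of `R` in the subcubes `2·P[2^d-1-i]`, so a symmetry `τ` with
`τ(R) = F` induces a symmetry of `{0,1}^d` carrying the reversed path onto `P`; since `P` starts
in `x_d = 0` and ends in `x_d = 1`, this forces `τ` to reflect axis `d`.

The first `2^(d-2) - 1` edges of a piece `σ(G(d))`, and also its last ones, use exactly the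
axes `|σ(1)|, …, |σ(d-2)|`. Hyperorthogonality of the window of `2^(d-2)` edges that starts with
the entry edge of `F` (axis `d`) shows that `d` is not among these axes for the first piece of
`F`. For `R`, the same windows at its entry edge (axis `d-1`) and at the edge leaving its first
piece (axis `1`) leave `d - 2` axes in `[1, d] \ {1, d-1}`, so `d` is among them. As `τ`
preserves axis `d` and carries the edges of the first piece of `R` to those of `F`, this is a
contradiction.
-/

section GrayCode

lemma length_grayRev (l : List ℤ) : (grayRev l).length = l.length := by simp [grayRev]

lemma getD_grayRev {l : List ℤ} {i : ℕ} (hi : i < l.length) :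
    (grayRev l).getD i 0 = -l.getD (l.length - 1 - i) 0 := by
  rw [List.getD_eq_getElem _ _ (by rwa [length_grayRev]), List.getD_eq_getElem _ _ (by omega)]
  simp [grayRev, List.getElem_reverse]

lemma G_succ (d : ℕ) : G (d + 1) = G d ++ [(d : ℤ) + 1] ++ grayRev (G d) := rfl

lemma length_G (d : ℕ) : (G d).length = 2 ^ d - 1 := by
  induction d with
  | zero => rfl
  | succ d ih =>
    have := Nat.one_le_two_pow (n := d)
    simp only [G_succ, List.length_append, length_grayRev, ih, List.length_singleton, pow_succ]
    omega

lemma isDir_of_mem_G {d : ℕ} {e : ℤ} (he : e ∈ G d) : IsDir d e := by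
  induction d generalizing e with
  | zero => simp [G] at he
  | succ d ih =>
    simp only [G_succ, grayRev, List.mem_append, List.mem_singleton, List.mem_reverse,
      List.mem_map] at he
    rcases he with (he | rfl) | ⟨x, hx, rfl⟩
    · exact ⟨(ih he).1, (ih he).2.trans d.le_succ⟩
    · exact ⟨by positivity, by omega⟩
    · exact ⟨neg_ne_zero.2 (ih hx).1, by rw [Int.natAbs_neg]; exact (ih hx).2.trans d.le_succ⟩

lemma isDir_G_getD {d p : ℕ} (hp : p < 2 ^ d - 1) : IsDir d ((G d).getD p 0) := by
  rw [List.getD_eq_getElem _ _ (by rwa [length_G])]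
  exact isDir_of_mem_G (List.getElem_mem _)

lemma G_prefix_of_le {a d : ℕ} (h : a ≤ d) : G a <+: G d := by
  induction d with
  | zero => rw [Nat.le_zero.1 h]
  | succ d ih =>
    rcases h.lt_or_eq with h | rfl
    · exact (ih (by omega)).trans ⟨[(d : ℤ) + 1] ++ grayRev (G d), by simp [G_succ]⟩
    · exact List.prefix_refl _

lemma getD_G_of_le {a d i : ℕ} (h : a ≤ d) (hi : i < 2 ^ a - 1) :
    (G d).getD i 0 = (G a).getD i 0 := by
  obtain ⟨t, ht⟩ := G_prefix_of_le h
  rw [← ht, List.getD_append _ _ _ _ (by rwa [length_G])]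

lemma G_getD_two_pow_sub_one {a d : ℕ} (ha : 1 ≤ a) (had : a ≤ d) :
    (G d).getD (2 ^ (a - 1) - 1) 0 = a := by
  obtain ⟨k, rfl⟩ : ∃ k, a = k + 1 := ⟨a - 1, by omega⟩
  have := Nat.one_le_two_pow (n := k)
  rw [Nat.add_sub_cancel, getD_G_of_le had (by rw [pow_succ]; omega), G_succ, List.append_assoc,
    List.getD_append_right _ _ _ _ (by rw [length_G])]
  simp [length_G]

lemma G_getD_mirror {d p : ℕ} (hd : 1 ≤ d) (hp : p < 2 ^ (d - 1) - 1) :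
    (G d).getD (2 ^ d - 2 - p) 0 = -(G d).getD p 0 := by
  obtain ⟨k, rfl⟩ : ∃ k, d = k + 1 := ⟨d - 1, by omega⟩
  simp only [Nat.add_sub_cancel] at hp
  have hlen := length_G k
  rw [G_succ, List.getD_append_right _ _ _ _ (by simp [hlen, pow_succ]; omega),
    List.getD_append _ _ _ _ (by simp [hlen]; omega), List.getD_append _ _ _ _ (by omega),
    getD_grayRev (by simp [hlen, pow_succ]; omega)]
  congr 2
  simp only [hlen, pow_succ, List.length_append, List.length_cons, List.length_nil, zero_add]
  omega

lemma natAbs_G_getD_mem_Icc {k d p : ℕ} (hk : k ≤ d) (hp : p < 2 ^ k - 1) :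
    ((G d).getD p 0).natAbs ∈ Finset.Icc 1 k := by
  rw [getD_G_of_le hk hp]
  have := isDir_G_getD hp
  exact Finset.mem_Icc.2 ⟨Int.natAbs_pos.2 this.1, this.2⟩

lemma image_natAbs_G_getD {k d : ℕ} (hk : k ≤ d) :
    (Finset.range (2 ^ k - 1)).image (fun p => ((G d).getD p 0).natAbs) = Finset.Icc 1 k := by
  refine Finset.Subset.antisymm (fun a ha => ?_) (fun a ha => ?_)
  · obtain ⟨p, hp, rfl⟩ := Finset.mem_image.1 ha
    exact natAbs_G_getD_mem_Icc hk (Finset.mem_range.1 hp)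
  · obtain ⟨ha1, hak⟩ := Finset.mem_Icc.1 ha
    have h1 := Nat.one_le_two_pow (n := a - 1)
    have h2 := Nat.pow_le_pow_right two_pos (show a - 1 + 1 ≤ k by omega)
    rw [pow_succ] at h2
    refine Finset.mem_image.2 ⟨2 ^ (a - 1) - 1, Finset.mem_range.2 (by omega), ?_⟩
    rw [G_getD_two_pow_sub_one ha1 (hak.trans hk), Int.natAbs_natCast]

end GrayCode

section Path

def displacement (j : ℕ) (l : List ℤ) : ℤ :=
  (l.map fun e => if e.natAbs = j then e.sign else 0).sum

@[simp] lemma displacement_append (j : ℕ) (l₁ l₂ : List ℤ) :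
    displacement j (l₁ ++ l₂) = displacement j l₁ + displacement j l₂ := by
  simp [displacement]

@[simp] lemma displacement_singleton (j : ℕ) (e : ℤ) :
    displacement j [e] = if e.natAbs = j then e.sign else 0 := by
  simp [displacement]

@[simp] lemma displacement_grayRev (j : ℕ) (l : List ℤ) :
    displacement j (grayRev l) = -displacement j l := by
  simp only [displacement, grayRev, List.map_reverse, List.sum_reverse, List.map_map]
  induction l with
  | nil => rfl
  | cons e l ih =>
    simp only [List.map_cons, List.sum_cons, ih, Function.comp_apply, Int.natAbs_neg, Int.sign_neg]
    split <;> ring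

lemma displacement_eq_zero {j : ℕ} {l : List ℤ} (h : ∀ e ∈ l, e.natAbs ≠ j) :
    displacement j l = 0 := by
  simp only [displacement]
  exact List.sum_eq_zero (by simpa using fun e he h' => absurd h' (h e he))

lemma displacement_G_of_lt {j d : ℕ} (h : d < j) : displacement j (G d) = 0 :=
  displacement_eq_zero fun e he => by have := (isDir_of_mem_G he).2; omega

lemma displacement_G {j d : ℕ} (hj : 1 ≤ j) :
    displacement j (G d) = if j = d then 1 else 0 := by
  induction d with
  | zero => rw [if_neg (by omega)]; rfl
  | succ d ih =>
    rw [G_succ, displacement_append, displacement_append, displacement_grayRev, ih,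
      displacement_singleton]
    have : ((d : ℤ) + 1).natAbs = d + 1 := by omega
    rw [this, Int.sign_eq_one_of_pos (by positivity)]
    split_ifs <;> omega

lemma foldl_move_apply (st : Pt) (l : List ℤ) (j : ℕ) :
    l.foldl move st j = st j + displacement j l := by
  induction l generalizing st with
  | nil => exact (add_zero _).symm
  | cons e l ih =>
    rw [List.foldl_cons, ih, ← List.singleton_append, displacement_append, displacement_singleton]
    simp only [move]
    split_ifs <;> omega

lemma length_pathVertices (st : Pt) (l : List ℤ) : (pathVertices st l).length = l.length + 1 :=
  List.length_scanl

lemma pathVertices_getD_apply {st : Pt} {l : List ℤ} {m : ℕ} (hm : m ≤ l.length) (j : ℕ) :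
    (pathVertices st l).getD m ptZero j = st j + displacement j (l.take m) := by
  unfold pathVertices
  rw [List.getD_eq_getElem _ _ (by rw [List.length_scanl]; omega), List.getElem_scanl,
    foldl_move_apply]

lemma pathVertices_getD_zero (st : Pt) (l : List ℤ) : (pathVertices st l).getD 0 ptZero = st := by
  funext j
  rw [pathVertices_getD_apply (Nat.zero_le _), List.take_zero]
  exact add_zero _

lemma pathVertices_getD_succ {st : Pt} {l : List ℤ} {t : ℕ} (ht : t < l.length) :
    (pathVertices st l).getD (t + 1) ptZero =
      move ((pathVertices st l).getD t ptZero) (l.getD t 0) := by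
  unfold pathVertices
  rw [List.getD_eq_getElem _ _ (by rw [List.length_scanl]; omega),
    List.getD_eq_getElem _ _ (by rw [List.length_scanl]; omega), List.getD_eq_getElem _ _ ht,
    List.getElem_succ_scanl]

lemma length_grayPath (d : ℕ) : (pathVertices ptZero (G d)).length = 2 ^ d := by
  have := Nat.one_le_two_pow (n := d)
  rw [length_pathVertices, length_G]
  omega

lemma grayPath_getD_two_pow_sub_one {b d : ℕ} (hb : 1 ≤ b) (hbd : b ≤ d) :
    (pathVertices ptZero (G d)).getD (2 ^ (b - 1)) ptZero b = 1 := by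
  obtain ⟨k, rfl⟩ : ∃ k, b = k + 1 := ⟨b - 1, by omega⟩
  obtain ⟨t, ht⟩ := G_prefix_of_le hbd
  have hlen := length_G k
  have := Nat.one_le_two_pow (n := k)
  have hk : (G k ++ [(k : ℤ) + 1]).length = 2 ^ k := by simp [hlen]; omega
  rw [Nat.add_sub_cancel, ← ht, G_succ,
    pathVertices_getD_apply (by simp [hlen]; omega),
    List.take_append_of_le_length (by simp [hlen]; omega),
    List.take_append_of_le_length hk.ge, List.take_of_length_le hk.le]
  rw [displacement_append, displacement_G_of_lt (Nat.lt_succ_self k), displacement_singleton,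
    if_pos (by omega), Int.sign_natCast_add_one]
  rfl

lemma grayPath_getD_apply_self {d m : ℕ} (hd : 1 ≤ d) (hm : 2 ^ (d - 1) ≤ m)
    (hm' : m < 2 ^ d) :
    (pathVertices ptZero (G d)).getD m ptZero d = 1 := by
  obtain ⟨k, rfl⟩ : ∃ k, d = k + 1 := ⟨d - 1, by omega⟩
  have hlen := length_G k
  have := Nat.one_le_two_pow (n := k)
  rw [Nat.add_sub_cancel] at hm
  have hrev :
      displacement (k + 1) ((grayRev (G k)).take (m - (G k ++ [(k : ℤ) + 1]).length)) = 0 := by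
    refine displacement_eq_zero fun e he => ?_
    have he' := List.mem_of_mem_take he
    rw [grayRev, List.mem_reverse, List.mem_map] at he'
    obtain ⟨x, hx, rfl⟩ := he'
    have := (isDir_of_mem_G hx).2
    omega
  rw [pathVertices_getD_apply (by rw [length_G]; omega), G_succ, List.take_append,
    List.take_of_length_le (by simp [hlen]; omega), displacement_append, displacement_append, hrev,
    displacement_G_of_lt (Nat.lt_succ_self k), displacement_singleton, if_pos (by omega),
    Int.sign_natCast_add_one]
  rfl

lemma grayPath_getD_last {d : ℕ} (hd : 1 ≤ d) :
    (pathVertices ptZero (G d)).getD (2 ^ d - 1) ptZero = fun j => if j = d then 1 else 0 := by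
  funext j
  rw [pathVertices_getD_apply (by rw [length_G]), List.take_of_length_le (by rw [length_G])]
  rcases Nat.eq_zero_or_pos j with rfl | hj
  · rw [displacement_eq_zero fun e he => (Int.natAbs_pos.2 (isDir_of_mem_G he).1).ne',
      if_neg (by omega)]
    rfl
  · simp [ptZero, displacement_G hj]

lemma grayPath_getD_penultimate_one {d : ℕ} (hd : 2 ≤ d) :
    (pathVertices ptZero (G d)).getD (2 ^ d - 2) ptZero 1 = 1 := by
  have h4 := Nat.pow_le_pow_right two_pos hd
  have hlast := congrFun (grayPath_getD_last (d := d) (by omega)) 1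
  have hG := G_getD_mirror (d := d) (p := 0) (by omega)
    (by have := Nat.pow_le_pow_right two_pos (show 1 ≤ d - 1 by omega); omega)
  rw [Nat.sub_zero, show (0 : ℕ) = 2 ^ (1 - 1) - 1 by simp,
    G_getD_two_pow_sub_one le_rfl (by omega)] at hG
  rw [show 2 ^ d - 1 = 2 ^ d - 2 + 1 by omega, pathVertices_getD_succ (by rw [length_G]; omega),
    hG] at hlast
  simp only [move, Nat.cast_one, Int.natAbs_neg, Int.natAbs_one, if_true, Int.sign_neg,
    Int.sign_one, if_neg (show 1 ≠ d by omega)] at hlast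
  omega

end Path

section Symmetry

variable {d : ℕ}

lemma isDir_natCast {j : ℕ} (h1 : 1 ≤ j) (h2 : j ≤ d) : IsDir d (j : ℤ) :=
  ⟨by omega, by omega⟩

lemma move_apply_ne_iff (x : Pt) {e : ℤ} (he : e ≠ 0) (j : ℕ) :
    move x e j ≠ x j ↔ j = e.natAbs := by
  have := Int.sign_eq_zero_iff_zero.not.2 he
  simp only [move]
  split_ifs <;> omega

lemma move_left_cancel {x : Pt} {e e' : ℤ} (he : e ≠ 0) (he' : e' ≠ 0)
    (h : move x e = move x e') : e = e' := by
  have hax : e.natAbs = e'.natAbs := by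
    have := (move_apply_ne_iff x he e.natAbs).2 rfl
    rw [h] at this
    exact (move_apply_ne_iff x he' _).1 this
  have hsign : e.sign = e'.sign := by
    have := congrFun h e.natAbs
    simp only [move, ← hax, if_true] at this
    omega
  rw [← Int.sign_mul_natAbs e, ← Int.sign_mul_natAbs e', hsign, hax]

lemma axisOf_move (x : Pt) {e : ℤ} (he : IsDir d e) : axisOf d x (move x e) = e.natAbs := by
  have hfilter : (Finset.range (d + 1)).filter (fun j => x j ≠ move x e j) = {e.natAbs} := by
    ext j
    simp only [Finset.mem_filter, Finset.mem_range, Finset.mem_singleton, ne_comm (a := x j),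
      move_apply_ne_iff x he.1]
    have := he.2
    constructor
    · exact And.right
    · rintro rfl; exact ⟨by omega, rfl⟩
  rw [axisOf, dirOf, hfilter, Finset.sum_singleton]
  simp [move, Int.natAbs_mul, Int.natAbs_sign_of_ne_zero he.1, Int.natAbs_abs]

lemma SignedPerm.natAbs_f_natAbs (σ : SignedPerm d) (e : ℤ) :
    (σ.f e.natAbs).natAbs = (σ.f e).natAbs := by
  rcases Int.natAbs_eq e with h | h
  · rw [← h]
  · conv_rhs => rw [h, σ.neg, Int.natAbs_neg]

lemma SignedPerm.natAbs_f_eq_iff (σ : SignedPerm d) {e : ℤ} (he : IsDir d e) {j : ℕ}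
    (hj1 : 1 ≤ j) (hjd : j ≤ d) :
    (σ.f e).natAbs = j ↔ e.natAbs = (σ.inv j).natAbs := by
  have hj := isDir_natCast hj1 hjd
  constructor
  · intro h
    rcases Int.natAbs_eq (σ.f e) with h' | h' <;> rw [h] at h'
    · rw [← σ.left_inv e he, h']
    · rw [← σ.left_inv e he, h', σ.neg_inv, Int.natAbs_neg]
  · intro h
    rcases Int.natAbs_eq_natAbs_iff.1 h with rfl | rfl
    · rw [σ.right_inv _ hj, Int.natAbs_natCast]
    · rw [σ.neg, σ.right_inv _ hj, Int.natAbs_neg, Int.natAbs_natCast]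

lemma SignedPerm.sign_f_of_natAbs_eq (σ : SignedPerm d) {e : ℤ} {j : ℕ} (hj1 : 1 ≤ j)
    (hjd : j ≤ d) (h : e.natAbs = (σ.inv j).natAbs) :
    (σ.f e).sign = if 0 ≤ σ.inv j then e.sign else -e.sign := by
  have hj := isDir_natCast hj1 hjd
  have hj0 : (j : ℤ).sign = 1 := Int.sign_eq_one_of_pos (by omega)
  rcases lt_or_gt_of_ne (σ.maps_inv _ hj).1 with hneg | hpos <;>
    rcases Int.natAbs_eq_natAbs_iff.1 h with rfl | rfl
  · rw [σ.right_inv _ hj, if_neg (by omega), Int.sign_eq_neg_one_of_neg hneg, hj0]; rfl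
  · rw [σ.neg, σ.right_inv _ hj, if_neg (by omega), Int.sign_neg, Int.sign_neg,
      Int.sign_eq_neg_one_of_neg hneg, hj0]; rfl
  · rw [σ.right_inv _ hj, if_pos hpos.le, Int.sign_eq_one_of_pos hpos, hj0]
  · rw [σ.neg, σ.right_inv _ hj, if_pos hpos.le, Int.sign_neg, Int.sign_neg,
      Int.sign_eq_one_of_pos hpos, hj0]

lemma applySP_move (σ : SignedPerm d) (M : ℤ) (x : Pt) {e : ℤ} (he : IsDir d e) :
    applySP d M σ (move x e) = move (applySP d M σ x) (σ.f e) := by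
  have hfe := σ.maps e he
  funext j
  by_cases hj : 1 ≤ j ∧ j ≤ d
  · have hiff := σ.natAbs_f_eq_iff he hj.1 hj.2
    simp only [applySP, if_pos hj, move]
    by_cases hax : e.natAbs = (σ.inv j).natAbs
    · have := σ.sign_f_of_natAbs_eq hj.1 hj.2 hax
      have := hiff.2 hax
      split_ifs <;> omega
    · have := mt hiff.1 hax
      split_ifs <;> omega
  · have := he.2
    have := hfe.2
    have := Int.natAbs_pos.2 he.1
    have := Int.natAbs_pos.2 hfe.1
    simp only [applySP, if_neg hj, move]
    split_ifs <;> omega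

/-- `x` lies in the subcube `2 · halve x + {0,1}^d`. -/
def halve (x : Pt) : Pt := fun j => x j / 2

lemma halve_applySP (τ : SignedPerm d) (x : Pt) :
    halve (applySP d 3 τ x) = applySP d 1 τ (halve x) := by
  funext j
  simp only [halve, applySP]
  split_ifs <;> omega

lemma applySP_one_zero_or_one (σ : SignedPerm d) {x : Pt} (hx : ∀ j, x j = 0 ∨ x j = 1)
    (j : ℕ) :
    applySP d 1 σ x j = 0 ∨ applySP d 1 σ x j = 1 := by
  have := hx j
  have := hx (σ.inv j).natAbs
  simp only [applySP]
  split_ifs <;> omega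

end Symmetry

section Inflation

variable {d : ℕ}

lemma length_flatten_map_range {α : Type*} (f : ℕ → List α) {n c : ℕ}
    (hc : ∀ i < n, (f i).length = c) : ((List.range n).map f).flatten.length = n * c := by
  induction n with
  | zero => simp
  | succ n ih =>
    rw [List.range_succ, List.map_append, List.flatten_append, List.length_append,
      ih fun i hi => hc i (by omega)]
    simp [hc n (by omega), Nat.succ_mul]

lemma getD_flatten_map_range {α : Type*} (f : ℕ → List α) (x : α) {n c q r : ℕ}
    (hc : ∀ i < n, (f i).length = c) (hq : q < n) (hr : r < c) :
    ((List.range n).map f).flatten.getD (q * c + r) x = (f q).getD r x := by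
  induction n with
  | zero => omega
  | succ n ih =>
    have hlen := length_flatten_map_range f fun i (hi : i < n) => hc i (by omega)
    rw [List.range_succ, List.map_append, List.flatten_append]
    rcases Nat.lt_or_ge q n with h | h
    · have : q * c + r < n * c := by nlinarith
      rw [List.getD_append _ _ _ _ (by omega), ih (fun i hi => hc i (by omega)) h]
    · obtain rfl : q = n := by omega
      rw [List.getD_append_right _ _ _ _ (by omega), hlen]
      simp

lemma length_grayPiece (σ : SignedPerm d) (v : Pt) : (grayPiece d σ v).length = 2 ^ d := by
  rw [grayPiece, length_pathVertices, List.length_map, length_G]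
  have := Nat.one_le_two_pow (n := d)
  omega

lemma grayPiece_getD_succ (σ : SignedPerm d) (v : Pt) {t : ℕ} (ht : t + 1 < 2 ^ d) :
    (grayPiece d σ v).getD (t + 1) ptZero =
      move ((grayPiece d σ v).getD t ptZero) (σ.f ((G d).getD t 0)) := by
  have hlen := length_G d
  rw [grayPiece, pathVertices_getD_succ (by simp [hlen]; omega),
    List.getD_eq_getElem _ _ (show t < ((G d).map σ.f).length by simp [hlen]; omega),
    List.getElem_map, List.getD_eq_getElem _ _ (show t < (G d).length by omega)]

lemma grayPiece_getD (σ : SignedPerm d) (v : Pt) {t : ℕ} (ht : t < 2 ^ d) :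
    (grayPiece d σ v).getD t ptZero =
      fun j => 2 * v j + applySP d 1 σ ((pathVertices ptZero (G d)).getD t ptZero) j := by
  induction t with
  | zero =>
    funext j
    rw [grayPiece, pathVertices_getD_zero, pathVertices_getD_zero]
    simp only [applySP, flipped, ptZero]
    split_ifs <;> omega
  | succ t ih =>
    rw [grayPiece_getD_succ σ v ht, ih (by omega),
      pathVertices_getD_succ (by rw [length_G]; omega),
      applySP_move σ 1 _ (isDir_G_getD (by omega))]
    funext j
    simp only [move]
    split_ifs <;> ring

lemma halve_grayPiece_getD (σ : SignedPerm d) (v : Pt) {t : ℕ} (ht : t < 2 ^ d)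
    (h01 : ∀ j, (pathVertices ptZero (G d)).getD t ptZero j = 0 ∨
      (pathVertices ptZero (G d)).getD t ptZero j = 1) :
    halve ((grayPiece d σ v).getD t ptZero) = v := by
  funext j
  have := applySP_one_zero_or_one σ h01 j
  rw [grayPiece_getD σ v ht, halve]
  omega

def inflation (d : ℕ) (σ : ℕ → SignedPerm d) (A : List Pt) : List Pt :=
  ((List.range A.length).map fun i => grayPiece d (σ i) (A.getD i ptZero)).flatten

lemma length_inflation (σ : ℕ → SignedPerm d) (A : List Pt) :
    (inflation d σ A).length = A.length * 2 ^ d :=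
  length_flatten_map_range _ fun _ _ => length_grayPiece _ _

lemma inflation_getD (σ : ℕ → SignedPerm d) (A : List Pt) {q r : ℕ} (hq : q < A.length)
    (hr : r < 2 ^ d) :
    (inflation d σ A).getD (q * 2 ^ d + r) ptZero =
      (grayPiece d (σ q) (A.getD q ptZero)).getD r ptZero :=
  getD_flatten_map_range _ _ (fun _ _ => length_grayPiece _ _) hq hr

lemma inflation_getD_of_lt (σ : ℕ → SignedPerm d) (A : List Pt) (hA : A ≠ []) {t : ℕ}
    (ht : t < 2 ^ d) :
    (inflation d σ A).getD t ptZero = (grayPiece d (σ 0) (A.getD 0 ptZero)).getD t ptZero := by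
  simpa using inflation_getD σ A (List.length_pos_of_ne_nil hA) ht

lemma inflation_getD_succ (σ : ℕ → SignedPerm d) (A : List Pt) (hA : A ≠ []) {t : ℕ}
    (ht : t + 1 < 2 ^ d) :
    (inflation d σ A).getD (t + 1) ptZero =
      move ((inflation d σ A).getD t ptZero) ((σ 0).f ((G d).getD t 0)) := by
  rw [inflation_getD_of_lt σ A hA ht, inflation_getD_of_lt σ A hA (by omega),
    grayPiece_getD_succ _ _ ht]

lemma halve_inflation_getD_first {σ : ℕ → SignedPerm d} {A : List Pt} {q : ℕ}
    (hq : q < A.length) : halve ((inflation d σ A).getD (q * 2 ^ d) ptZero) = A.getD q ptZero := by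
  have := Nat.one_le_two_pow (n := d)
  rw [← Nat.add_zero (q * 2 ^ d), inflation_getD σ A hq (by omega),
    halve_grayPiece_getD _ _ (by omega)]
  intro j
  rw [pathVertices_getD_zero]
  exact Or.inl rfl

lemma halve_inflation_getD_last {σ : ℕ → SignedPerm d} {A : List Pt} (hd : 1 ≤ d) {q : ℕ}
    (hq : q < A.length) :
    halve ((inflation d σ A).getD (q * 2 ^ d + (2 ^ d - 1)) ptZero) = A.getD q ptZero := by
  have := Nat.one_le_two_pow (n := d)
  rw [inflation_getD σ A hq (by omega), halve_grayPiece_getD _ _ (by omega)]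
  intro j
  rw [grayPath_getD_last hd]
  by_cases h : j = d <;> simp [h]

lemma axE_eq_of_halve_ne {c : List Pt} (hc : c.IsChain (IsEdge d)) (en ex : ℤ) {t j : ℕ}
    (ht : 0 < t) (ht' : t < c.length)
    (hj : halve (c.getD (t - 1) ptZero) j ≠ halve (c.getD t ptZero) j) :
    axE d en c ex t = j := by
  obtain ⟨t, rfl⟩ : ∃ s, t = s + 1 := ⟨t - 1, by omega⟩
  rw [Nat.add_sub_cancel] at hj
  obtain ⟨e, he, hmove⟩ := List.isChain_iff_getElem.1 hc t ht'
  rw [← List.getD_eq_getElem _ ptZero, ← List.getD_eq_getElem _ ptZero] at hmove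
  have hne : move (c.getD t ptZero) e j ≠ c.getD t ptZero j := by
    rw [← hmove]
    exact fun h => hj (by rw [halve, halve, h])
  rw [axE, if_neg (by omega), if_neg (by omega), Nat.add_sub_cancel, hmove, axisOf_move _ he,
    ← (move_apply_ne_iff _ he.1 j).1 hne]

lemma getD_map_of_lt {α β : Type*} {l : List α} {f : α → β} (x : α) (y : β) {k : ℕ}
    (hk : k < l.length) : (l.map f).getD k y = f (l.getD k x) := by
  rw [List.getD_eq_getElem _ _ (by simpa), List.getElem_map, List.getD_eq_getElem _ _ hk]

lemma f_G_getD_eq_of_inflation_eq_map {σF σR : ℕ → SignedPerm d} {A B : List Pt} {M : ℤ}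
    {τ : SignedPerm d} (hA : A ≠ []) (hB : B ≠ [])
    (h : inflation d σF A = (inflation d σR B).map (applySP d M τ)) {t : ℕ}
    (ht : t + 1 < 2 ^ d) :
    (σF 0).f ((G d).getD t 0) = τ.f ((σR 0).f ((G d).getD t 0)) := by
  have hlen : 2 ^ d ≤ (inflation d σR B).length := by
    rw [length_inflation]; exact Nat.le_mul_of_pos_left _ (List.length_pos_of_ne_nil hB)
  have hG := isDir_G_getD (d := d) (p := t) (by omega)
  have hFR : ∀ k < 2 ^ d, (inflation d σF A).getD k ptZero =
      applySP d M τ ((inflation d σR B).getD k ptZero) := fun k hk => by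
    rw [h, getD_map_of_lt ptZero ptZero (by omega)]
  refine move_left_cancel (x := (inflation d σF A).getD t ptZero) ((σF 0).maps _ hG).1
    (τ.maps _ ((σR 0).maps _ hG)).1 ?_
  rw [← inflation_getD_succ σF A hA ht, hFR _ ht, inflation_getD_succ σR B hB ht,
    applySP_move _ _ _ ((σR 0).maps _ hG), ← hFR _ (by omega)]

end Inflation

lemma notMem_and_card_eq_of_card_insert {α : Type*} [DecidableEq α] {s : Finset α} {x : α}
    {n : ℕ} (hs : s.card ≤ n) (h : (insert x s).card = n + 1) : x ∉ s ∧ s.card = n := by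
  by_cases hx : x ∈ s
  · rw [Finset.insert_eq_of_mem hx] at h
    omega
  · rw [Finset.card_insert_of_notMem hx] at h
    exact ⟨hx, by omega⟩

section Windows

variable {d : ℕ}

/-- The axes of the first, and of the last, `2^(d-2) - 1` edges of the `1`-curve `σ(G(d))`. -/
def headAxes (σ : SignedPerm d) : Finset ℕ :=
  (Finset.Icc 1 (d - 2)).image fun a : ℕ => (σ.f a).natAbs

lemma headAxes_subset_Icc (σ : SignedPerm d) : headAxes σ ⊆ Finset.Icc 1 d := by
  intro x hx
  obtain ⟨a, ha, rfl⟩ := Finset.mem_image.1 hx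
  have ha := Finset.mem_Icc.1 ha
  have := σ.maps _ (isDir_natCast ha.1 (by omega : a ≤ d))
  exact Finset.mem_Icc.2 ⟨Int.natAbs_pos.2 this.1, this.2⟩

lemma card_headAxes_le (σ : SignedPerm d) : (headAxes σ).card ≤ d - 2 :=
  Finset.card_image_le.trans (by simp)

lemma image_natAbs_f_G_getD (σ : SignedPerm d) :
    (Finset.range (2 ^ (d - 2) - 1)).image (fun p => (σ.f ((G d).getD p 0)).natAbs) =
      headAxes σ := by
  rw [headAxes, ← image_natAbs_G_getD (d := d) (Nat.sub_le d 2), Finset.image_image]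
  exact Finset.image_congr fun p _ => (σ.natAbs_f_natAbs _).symm

lemma axE_inflation (en ex : ℤ) (σ : ℕ → SignedPerm d) {A : List Pt} (hA : A ≠ [])
    {t : ℕ} (ht : t + 1 < 2 ^ d) :
    axE d en (inflation d σ A) ex (t + 1) = ((σ 0).f ((G d).getD t 0)).natAbs := by
  have := List.length_pos_of_ne_nil hA
  have hlen : 2 ^ d ≤ (inflation d σ A).length := by
    rw [length_inflation]; exact Nat.le_mul_of_pos_left _ this
  rw [axE, if_neg (by omega), if_neg (by omega), Nat.add_sub_cancel,
    inflation_getD_succ σ A hA ht, axisOf_move _ ((σ 0).maps _ (isDir_G_getD (by omega)))]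

lemma image_axE_inflation_entry (en ex : ℤ) (σ : ℕ → SignedPerm d) {A : List Pt}
    (hd : 2 ≤ d) (hA : A ≠ []) :
    (Finset.range (2 ^ (d - 2))).image (fun t => axE d en (inflation d σ A) ex (0 + t)) =
      insert en.natAbs (headAxes (σ 0)) := by
  have := Nat.pow_lt_pow_right (a := 2) (by norm_num) (show d - 2 < d by omega)
  have := Nat.one_le_two_pow (n := d - 2)
  rw [← Nat.sub_add_cancel this, Finset.range_add_one', Finset.map_eq_image, Finset.image_insert,
    Finset.image_image, ← image_natAbs_f_G_getD]
  refine congrArg₂ insert (by simp [axE]) (Finset.image_congr fun p hp => ?_)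
  change axE d en (inflation d σ A) ex (0 + (p + 1)) = _
  rw [zero_add, axE_inflation en ex σ hA (by simp at hp; omega)]

lemma image_axE_inflation_exit (en ex : ℤ) (σ : ℕ → SignedPerm d) {A : List Pt}
    (hd : 2 ≤ d) (hA : A ≠ []) :
    (Finset.range (2 ^ (d - 2))).image
        (fun t => axE d en (inflation d σ A) ex (2 ^ d - 2 ^ (d - 2) + 1 + t)) =
      insert (axE d en (inflation d σ A) ex (2 ^ d)) (headAxes (σ 0)) := by
  have h4 : 2 ^ d = 2 ^ (d - 2) * 4 := by
    rw [show (4 : ℕ) = 2 ^ 2 by rfl, ← pow_add, Nat.sub_add_cancel hd]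
  have h2 : 2 ^ (d - 1) = 2 ^ (d - 2) * 2 := by rw [← pow_succ]; congr 1; omega
  have := Nat.one_le_two_pow (n := d - 2)
  set n := 2 ^ (d - 2) - 1 with hn
  rw [show 2 ^ (d - 2) = n + 1 by omega, Finset.range_add_one, Finset.image_insert,
    show 2 ^ d - (n + 1) + 1 + n = 2 ^ d by omega, ← image_natAbs_f_G_getD]
  conv_rhs => rw [← Finset.range_image_pred_top_sub n, Finset.image_image]
  refine congrArg (insert _) (Finset.image_congr fun p hp => ?_)
  have hp : p < n := by simpa using hp
  rw [Function.comp_apply, show 2 ^ d - (n + 1) + 1 + p = 2 ^ d - 2 - (n - 1 - p) + 1 by omega,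
    axE_inflation en ex σ hA (by omega), G_getD_mirror (by omega) (by omega), (σ 0).neg,
    Int.natAbs_neg]

lemma natAbs_notMem_headAxes_and_card_eq_of_hyperorthogonalE {en ex : ℤ}
    {σ : ℕ → SignedPerm d} {A : List Pt} (hd : 2 ≤ d) (hA : A ≠ [])
    (h : HyperorthogonalE d en (inflation d σ A) ex) :
    en.natAbs ∉ headAxes (σ 0) ∧ (headAxes (σ 0)).card = d - 2 := by
  have := Nat.pow_le_pow_right two_pos (Nat.sub_le d 2)
  have hlen := length_inflation σ A
  have := Nat.le_mul_of_pos_left (2 ^ d) (List.length_pos_of_ne_nil hA)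
  have hwin := h (d - 2) le_rfl 0 (by omega)
  rw [image_axE_inflation_entry en ex σ hd hA] at hwin
  exact notMem_and_card_eq_of_card_insert (card_headAxes_le _) hwin

lemma axE_two_pow_notMem_headAxes_of_hyperorthogonalE {en ex : ℤ} {σ : ℕ → SignedPerm d}
    {A : List Pt} (hd : 2 ≤ d) (hA : A ≠ []) (h : HyperorthogonalE d en (inflation d σ A) ex) :
    axE d en (inflation d σ A) ex (2 ^ d) ∉ headAxes (σ 0) := by
  have := Nat.pow_le_pow_right two_pos (Nat.sub_le d 2)
  have hlen := length_inflation σ A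
  have := Nat.le_mul_of_pos_left (2 ^ d) (List.length_pos_of_ne_nil hA)
  have hwin := h (d - 2) le_rfl (2 ^ d - 2 ^ (d - 2) + 1) (by omega)
  rw [image_axE_inflation_exit en ex σ hd hA] at hwin
  exact (notMem_and_card_eq_of_card_insert (card_headAxes_le _) hwin).1

lemma self_mem_headAxes {σ : SignedPerm d} (hd : 3 ≤ d) (h1 : 1 ∉ headAxes σ)
    (hd1 : d - 1 ∉ headAxes σ) (hcard : (headAxes σ).card = d - 2) : d ∈ headAxes σ := by
  by_contra hdσ
  have hsub : headAxes σ ⊆ Finset.Icc 2 (d - 2) := fun x hx => by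
    have := Finset.mem_Icc.1 (headAxes_subset_Icc _ hx)
    have : x ≠ 1 := fun h => h1 (h ▸ hx)
    have : x ≠ d - 1 := fun h => hd1 (h ▸ hx)
    have : x ≠ d := fun h => hdσ (h ▸ hx)
    exact Finset.mem_Icc.2 ⟨by omega, by omega⟩
  have := Finset.card_le_card hsub
  rw [Nat.card_Icc] at this
  omega

lemma mem_headAxes_of_inflation_eq_map {σF σR : ℕ → SignedPerm d} {A B : List Pt} {M : ℤ}
    {τ : SignedPerm d} (hA : A ≠ []) (hB : B ≠ [])
    (hτ : inflation d σF A = (inflation d σR B).map (applySP d M τ)) (hτd : τ.inv d = -d)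
    (h : d ∈ headAxes (σR 0)) : d ∈ headAxes (σF 0) := by
  obtain ⟨a, ha, hσa⟩ := Finset.mem_image.1 h
  obtain ⟨ha1, ha2⟩ := Finset.mem_Icc.1 ha
  refine Finset.mem_image.2 ⟨a, ha, ?_⟩
  have := Nat.pow_lt_pow_right (a := 2) (by norm_num) (show a - 1 < d by omega)
  have := Nat.one_le_two_pow (n := a - 1)
  have hf := f_G_getD_eq_of_inflation_eq_map hA hB hτ (t := 2 ^ (a - 1) - 1) (by omega)
  rw [G_getD_two_pow_sub_one ha1 (by omega)] at hf
  rw [hf, τ.natAbs_f_eq_iff ((σR 0).maps _ (isDir_natCast ha1 (by omega))) (by omega) le_rfl,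
    hσa, hτd, Int.natAbs_neg, Int.natAbs_natCast]

end Windows

section GrayInflation

variable {d : ℕ}

/-- Coordinate `b = |τ(d)|` of the image is read off coordinate `d`. It is reflected since the
two paths start on opposite sides of `x_d = 1/2`, and `b = d` since otherwise the vertex
`P[2^(b-1)]` separates the two coordinates. -/
lemma SignedPerm.inv_eq_neg_of_grayPath_reverse (τ : SignedPerm d) (hd : 1 ≤ d)
    (h : ∀ q < 2 ^ d, (pathVertices ptZero (G d)).getD q ptZero =
      applySP d 1 τ ((pathVertices ptZero (G d)).getD (2 ^ d - 1 - q) ptZero)) :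
    τ.inv d = -d := by
  set P := pathVertices ptZero (G d)
  have hdir := τ.maps _ (isDir_natCast hd le_rfl)
  set b := (τ.f d).natAbs with hb
  have hb1 : 1 ≤ b := Int.natAbs_pos.2 hdir.1
  have hbd : b ≤ d := hdir.2
  have hinv : (τ.inv b).natAbs = d := by
    rw [← (τ.natAbs_f_eq_iff (isDir_natCast hd le_rfl) hb1 hbd).1 hb.symm, Int.natAbs_natCast]
  have hP : ∀ q < 2 ^ d, P.getD q ptZero b =
      if 0 ≤ τ.inv b then P.getD (2 ^ d - 1 - q) ptZero d
      else 1 - P.getD (2 ^ d - 1 - q) ptZero d := by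
    intro q hq
    rw [h q hq, applySP, if_pos ⟨hb1, hbd⟩, hinv]
  have hpow : 2 ^ d = 2 ^ (d - 1) * 2 := by rw [← pow_succ, Nat.sub_add_cancel hd]
  have := Nat.one_le_two_pow (n := d - 1)
  have hneg : τ.inv b < 0 := by
    have h0 := hP 0 (by omega)
    rw [pathVertices_getD_zero, Nat.sub_zero,
      grayPath_getD_apply_self hd (by omega) (by omega)] at h0
    split_ifs at h0 with hs
    · simp [ptZero] at h0
    · omega
  have hbeq : b = d := by
    by_contra hne
    have hq := Nat.pow_le_pow_right two_pos (show b - 1 + 1 ≤ d - 1 by omega)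
    have := Nat.one_le_two_pow (n := b - 1)
    rw [pow_succ] at hq
    have h1 := hP (2 ^ (b - 1)) (by omega)
    rw [grayPath_getD_two_pow_sub_one hb1 hbd, if_neg (by omega),
      grayPath_getD_apply_self hd (by omega) (by omega)] at h1
    omega
  rw [hbeq] at hneg hinv
  omega

lemma inv_eq_neg_of_inflation_eq_map_reverse {σF σR : ℕ → SignedPerm d} {τ : SignedPerm d}
    (hd : 1 ≤ d)
    (hτ : inflation d σF (pathVertices ptZero (G d)) =
      (inflation d σR (pathVertices ptZero (G d)).reverse).map (applySP d 3 τ)) :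
    τ.inv d = -d := by
  have hPlen := length_grayPath d
  refine τ.inv_eq_neg_of_grayPath_reverse hd fun q hq => ?_
  have hq' : q * 2 ^ d < (inflation d σR (pathVertices ptZero (G d)).reverse).length := by
    rw [length_inflation, List.length_reverse, hPlen]
    exact Nat.mul_lt_mul_of_pos_right hq (by positivity)
  rw [← halve_inflation_getD_first (σ := σF) (hPlen ▸ hq), hτ,
    getD_map_of_lt ptZero ptZero hq', halve_applySP, halve_inflation_getD_first (by simpa [hPlen]),
    List.getD_reverse _ (by omega), hPlen]

/-- The subcubes of the first two pieces, `2·P[2^d-1]` and `2·P[2^d-2]`, differ in axis `1`. -/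
lemma axE_inflation_reverse_two_pow {σ : ℕ → SignedPerm d} (hd : 2 ≤ d) (en ex : ℤ)
    (hc : (inflation d σ (pathVertices ptZero (G d)).reverse).IsChain (IsEdge d)) :
    axE d en (inflation d σ (pathVertices ptZero (G d)).reverse) ex (2 ^ d) = 1 := by
  have hPlen := length_grayPath d
  have h4 := Nat.pow_le_pow_right two_pos hd
  have h1 := halve_inflation_getD_last (σ := σ) (d := d) (by omega) (q := 0)
    (by rw [List.length_reverse, hPlen]; positivity)
  have h2 := halve_inflation_getD_first (σ := σ) (q := 1)
    (by rw [List.length_reverse, hPlen]; omega)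
  rw [zero_mul, zero_add, List.getD_reverse _ (by omega), hPlen, Nat.sub_zero] at h1
  rw [one_mul, List.getD_reverse _ (by omega), hPlen, Nat.sub_sub] at h2
  refine axE_eq_of_halve_ne hc _ _ (by positivity) ?_ ?_
  · rw [length_inflation, List.length_reverse, hPlen]
    exact lt_mul_self (by omega)
  · rw [h1, h2, grayPath_getD_last (by omega), grayPath_getD_penultimate_one (by omega)]
    simp only [if_neg (show 1 ≠ d by omega)]
    decide

end GrayInflation

theorem no_nonreverse_isometry_general (d : ℕ) (hd : 3 ≤ d)
    (σF σR : ℕ → SignedPerm d) (F R : List Pt)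
    (hF : F = ((List.range (2 ^ d)).map
      (fun i => grayPiece d (σF i)
        ((pathVertices ptZero (G d)).getD i ptZero))).flatten)
    (hR : R = ((List.range (2 ^ d)).map
      (fun i => grayPiece d (σR i)
        (((pathVertices ptZero (G d)).reverse).getD i ptZero))).flatten)
    (hRv : IsKCurve d 2 R)
    (hFho : HyperorthogonalE d (d : ℤ) F (-((d : ℤ) - 1)))
    (hRho : HyperorthogonalE d ((d : ℤ) - 1) R (-(d : ℤ))) :
    ¬ ∃ τ : SignedPerm d, F = R.map (applySP d 3 τ) := by
  rintro ⟨τ, hτ⟩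
  have hPlen := length_grayPath d
  have hP : pathVertices ptZero (G d) ≠ [] :=
    List.ne_nil_of_length_pos (by rw [hPlen]; positivity)
  have hPr := List.reverse_ne_nil_iff.2 hP
  rw [← hPlen] at hF
  rw [← hPlen, ← List.length_reverse] at hR
  rw [← inflation] at hF hR
  subst hF hR
  have hτd := inv_eq_neg_of_inflation_eq_map_reverse (by omega) hτ
  have hdF := (natAbs_notMem_headAxes_and_card_eq_of_hyperorthogonalE (by omega) hP hFho).1
  obtain ⟨hd1R, hcardR⟩ :=
    natAbs_notMem_headAxes_and_card_eq_of_hyperorthogonalE (by omega) hPr hRho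
  have h1R := axE_two_pow_notMem_headAxes_of_hyperorthogonalE (by omega) hPr hRho
  rw [Int.natAbs_natCast] at hdF
  rw [show ((d : ℤ) - 1).natAbs = d - 1 by omega] at hd1R
  rw [axE_inflation_reverse_two_pow (by omega) _ _ hRv.1.2] at h1R
  exact hdF <|
    mem_headAxes_of_inflation_eq_map hP hPr hτ hτd (self_mem_headAxes hd h1R hd1R hcardR)

/-- let `F'` be an extended hyperorthogonal well-folded curve
obtained by one step of inflation from `G'(d)` (entry direction `d`, curve
`G(d)` from the origin, exit direction `−(d−1)`), and let `R'` be one obtained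
by one step of inflation from the reverse of `G'(d)` (entry direction `d−1`,
the reversed curve, exit direction `−d`).  Then there is no non-reverse
isometry `τ` (a hyperoctahedral symmetry of the 2-cube `{0,…,3}^d`, without
reversal) such that `τ(R')` visits its vertices in the same order as `F'`. -/
theorem no_nonreverse_isometry (d : ℕ) (hd : 3 ≤ d)
    (σF σR : ℕ → SignedPerm d) (F R : List Pt)
    (hF : F = ((List.range (2 ^ d)).map
      (fun i => grayPiece d (σF i)
        ((pathVertices ptZero (G d)).getD i ptZero))).flatten)
    (hR : R = ((List.range (2 ^ d)).map
      (fun i => grayPiece d (σR i)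
        (((pathVertices ptZero (G d)).reverse).getD i ptZero))).flatten)
    (hFv : IsKCurve d 2 F) (hRv : IsKCurve d 2 R)
    (hFho : HyperorthogonalE d (d : ℤ) F (-((d : ℤ) - 1)))
    (hRho : HyperorthogonalE d ((d : ℤ) - 1) R (-(d : ℤ))) :
    ¬ ∃ τ : SignedPerm d, F = R.map (applySP d 3 τ) :=
  no_nonreverse_isometry_general d hd σF σR F R hF hR hRv hFho hRho
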